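/- arXiv:1408.6509 — 3 statements merged into one kernel-verified Lean document; each statement's English description precedes it below -/
import Mathlib

section
/- Let G and H be groups and let f be an element of the free product G * H that is non-simple (not conjugate in G * H to any element of the canonical images of G or H). Then there exist elements a, b, c of G * H with ‖a‖ + ‖c‖ ≤ 2‖f‖ and 1 ≤ ‖b‖ ≤ ‖f‖ such that for every integer n ≥ 3 one has f^n = a · b^{n-2} · c and moreover ‖f^n‖ = ‖a‖ + (n-2)·‖b‖ + ‖c‖ (i.e., this factorization realizes the normal form of f^n). -/
/-- Syllable length of an element of the free product `G ∗ H`: the geodesic length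
with respect to the generating set `G ∪ H` (the union of the canonical images of
`G` and `H`). This coincides with the number of syllables in the normal form. -/
noncomputable def sylLen {G H : Type*} [Group G] [Group H] (f : Monoid.Coprod G H) : ℕ :=
  sInf {k | ∃ w : List (Monoid.Coprod G H), w.length = k ∧
    (∀ x ∈ w, (∃ g : G, x = Monoid.Coprod.inl g) ∨ (∃ h : H, x = Monoid.Coprod.inr h)) ∧
    w.prod = f}

/-- An element of `G ∗ H` is *simple* if it is conjugate in `G ∗ H` to an element of
the canonical image of `G` or of `H`. -/
def IsSimpleElem {G H : Type*} [Group G] [Group H] (f : Monoid.Coprod G H) : Prop :=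
  ∃ u x : Monoid.Coprod G H,
    ((∃ g : G, x = Monoid.Coprod.inl g) ∨ (∃ h : H, x = Monoid.Coprod.inr h)) ∧
    f = u⁻¹ * x * u

/-!
Write the reduced word of `f` as `u m u⁻¹` with `u` as long as possible; since `f` is not
simple, `m` has at least two syllables. If the first and last syllables of `m` lie in different
factors, `m` is cyclically reduced and `f ^ n = u m ^ n u⁻¹` is already a normal form. Otherwise
`m = x m' y` with `x, y` in the same factor and `y x ≠ 1` (by maximality of `u`); then
`w = m' (y x)` is cyclically reduced and `f ^ n = (u x) w ^ (n - 1) (m' y u⁻¹)`, again without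
cancellation. In both cases `f = v z` and `f v = v w`, so `f ^ (n + 1) = v w ^ n z`.
-/

open Monoid CoprodI

namespace Monoid.CoprodI

variable {ι : Type*} {M : ι → Type*} [∀ i, Group (M i)]

def ofList (l : List (Σ i, M i)) : CoprodI M := (l.map fun a => of a.2).prod

def IsReduced (l : List (Σ i, M i)) : Prop :=
  (∀ a ∈ l, a.2 ≠ 1) ∧ l.IsChain fun a b => a.1 ≠ b.1

def IsCyclicallyReduced (l : List (Σ i, M i)) : Prop :=
  IsReduced l ∧ ∀ a ∈ l.getLast?, ∀ b ∈ l.head?, a.1 ≠ b.1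

def IsSimple (x : CoprodI M) : Prop := ∃ i, ∃ m : M i, IsConj x (of m)

open scoped Classical in
noncomputable def syllableLength (x : CoprodI M) : ℕ := (Word.equiv x).toList.length

@[simp] lemma ofList_nil : ofList ([] : List (Σ i, M i)) = 1 := rfl

@[simp] lemma ofList_cons (a : Σ i, M i) (l : List (Σ i, M i)) :
    ofList (a :: l) = of a.2 * ofList l := List.prod_cons

@[simp] lemma ofList_append (l₁ l₂ : List (Σ i, M i)) :
    ofList (l₁ ++ l₂) = ofList l₁ * ofList l₂ := by
  simp [ofList]

@[simp] lemma ofList_flatten_replicate (n : ℕ) (l : List (Σ i, M i)) :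
    ofList (List.replicate n l).flatten = ofList l ^ n := by
  induction n with
  | zero => simp
  | succ n ih => rw [List.replicate_succ, List.flatten_cons, ofList_append, ih, pow_succ']

@[simp] lemma isReduced_nil : IsReduced ([] : List (Σ i, M i)) := ⟨by simp, .nil⟩

@[simp] lemma isReduced_singleton {a : Σ i, M i} : IsReduced [a] ↔ a.2 ≠ 1 := by
  simp [IsReduced]

lemma isReduced_append {l₁ l₂ : List (Σ i, M i)} :
    IsReduced (l₁ ++ l₂) ↔
      IsReduced l₁ ∧ IsReduced l₂ ∧ ∀ a ∈ l₁.getLast?, ∀ b ∈ l₂.head?, a.1 ≠ b.1 := by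
  simp only [IsReduced, List.mem_append, List.isChain_append]
  grind

lemma isReduced_cons {a : Σ i, M i} {l : List (Σ i, M i)} :
    IsReduced (a :: l) ↔ a.2 ≠ 1 ∧ IsReduced l ∧ ∀ b ∈ l.head?, a.1 ≠ b.1 := by
  simp only [IsReduced, List.mem_cons, List.isChain_cons]
  grind

lemma IsReduced.of_cons_append {a b : Σ i, M i} {m : List (Σ i, M i)}
    (h : IsReduced (a :: (m ++ [b]))) : IsReduced m :=
  (isReduced_append.1 (isReduced_cons.1 h).2.1).1

lemma IsReduced.replace_middle {u m m' z : List (Σ i, M i)} (h : IsReduced (u ++ m ++ z))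
    (hm' : IsReduced m') (hhead : m'.head? = m.head?) (hlast : m'.getLast? = m.getLast?) :
    IsReduced (u ++ m' ++ z) := by
  simp only [isReduced_append, List.getLast?_append, hhead, hlast] at h ⊢
  tauto

lemma IsReduced.replace_last {l : List (Σ i, M i)} {i : ι} {g g' : M i}
    (h : IsReduced (l ++ [⟨i, g⟩])) (hg' : g' ≠ 1) : IsReduced (l ++ [⟨i, g'⟩]) := by
  simp_all [isReduced_append]

lemma IsCyclicallyReduced.isReduced_flatten_replicate {w : List (Σ i, M i)}
    (hw : IsCyclicallyReduced w) (n : ℕ) : IsReduced (List.replicate n w).flatten := by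
  induction n with
  | zero => exact isReduced_nil
  | succ n ih =>
    rw [List.replicate_succ, List.flatten_cons, isReduced_append]
    refine ⟨hw.1, ih, fun a ha b hb => hw.2 a ha b ?_⟩
    rcases n with _ | n
    · simp at hb
    · rwa [List.head?_flatten_replicate n.succ_ne_zero] at hb

lemma IsReduced.append_flatten_replicate_append {v w z : List (Σ i, M i)}
    (hw : IsCyclicallyReduced w) (h : IsReduced (v ++ w ++ z)) {n : ℕ} (hn : n ≠ 0) :
    IsReduced (v ++ (List.replicate n w).flatten ++ z) :=
  h.replace_middle (hw.isReduced_flatten_replicate n) (List.head?_flatten_replicate hn w)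
    (List.getLast?_flatten_replicate hn w)

lemma Word.isReduced (w : Word M) : IsReduced w.toList := ⟨w.ne_one, w.chain_ne⟩

lemma ofList_equiv_toList [DecidableEq ι] [∀ i, DecidableEq (M i)] (x : CoprodI M) :
    ofList (Word.equiv x).toList = x :=
  Word.equiv.symm_apply_apply x

lemma equiv_ofList [DecidableEq ι] [∀ i, DecidableEq (M i)] {l : List (Σ i, M i)}
    (hl : IsReduced l) : (Word.equiv (ofList l)).toList = l := by
  rw [show ofList l = Word.equiv.symm ⟨l, hl.1, hl.2⟩ from rfl, Equiv.apply_symm_apply]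

lemma IsReduced.eq_of_ofList_eq {l₁ l₂ : List (Σ i, M i)} (h₁ : IsReduced l₁)
    (h₂ : IsReduced l₂) (h : ofList l₁ = ofList l₂) : l₁ = l₂ := by
  classical
  rw [← equiv_ofList h₁, ← equiv_ofList h₂, h]

lemma syllableLength_ofList {l : List (Σ i, M i)} (hl : IsReduced l) :
    syllableLength (ofList l) = l.length := by
  classical
  rw [syllableLength, equiv_ofList hl]

lemma Word.length_tail_le_length_rcons [∀ i, DecidableEq (M i)] {i : ι} (p : Word.Pair M i) :
    p.tail.toList.length ≤ (Word.rcons p).toList.length := by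
  unfold Word.rcons; split <;> simp

lemma Word.length_rcons_le [∀ i, DecidableEq (M i)] {i : ι} (p : Word.Pair M i) :
    (Word.rcons p).toList.length ≤ p.tail.toList.length + 1 := by
  unfold Word.rcons; split <;> simp

lemma syllableLength_of_mul_le {i : ι} (m : M i) (x : CoprodI M) :
    syllableLength (of m * x) ≤ syllableLength x + 1 := by
  classical
  have hmx : Word.equiv (of m * x) = of m • Word.equiv x := by
    change (of m * x) • (Word.empty : Word M) = of m • (x • Word.empty)
    exact mul_smul _ _ _
  have htail := Word.length_tail_le_length_rcons (Word.equivPair i (Word.equiv x))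
  rw [← Word.equivPair_symm, Equiv.symm_apply_apply] at htail
  calc syllableLength (of m * x)
      ≤ (Word.equivPair i (Word.equiv x)).tail.toList.length + 1 := by
        rw [syllableLength, hmx, Word.of_smul_def]
        exact Word.length_rcons_le _
    _ ≤ syllableLength x + 1 := by
        rw [syllableLength]
        gcongr

lemma IsSimple.of_isConj {x y : CoprodI M} (hy : IsSimple y) (h : IsConj x y) : IsSimple x := by
  obtain ⟨i, m, hm⟩ := hy
  exact ⟨i, m, h.trans hm⟩

lemma isSimple_of {i : ι} (m : M i) : IsSimple (of m) := ⟨i, m, .refl _⟩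

lemma isSimple_one [Nonempty ι] : IsSimple (1 : CoprodI M) :=
  ⟨Classical.arbitrary ι, 1, by rw [map_one]⟩

/-- `l = v ++ z` and `w` is the cyclically reduced word of `v⁻¹ l v`, with `v w z` reduced as
written; hence `l ^ (n + 1) = v w ^ n z` is a normal form for `n ≥ 1`. -/
structure PowerSplitting (l v w z : List (Σ i, M i)) : Prop where
  append_eq : v ++ z = l
  right_ne_nil : z ≠ []
  middle_ne_nil : w ≠ []
  isCyclicallyReduced : IsCyclicallyReduced w
  isReduced : IsReduced (v ++ w ++ z)
  semiconjBy : SemiconjBy (ofList v) (ofList w) (ofList l)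
  length_le : w.length ≤ l.length

namespace PowerSplitting

variable {l v w z : List (Σ i, M i)}

lemma head?_eq (hl : IsReduced l) (h : PowerSplitting l v w z) :
    (v ++ w ++ z).head? = l.head? := by
  rcases v with _ | ⟨a, v⟩
  · have hwl : w = l := h.isCyclicallyReduced.1.eq_of_ofList_eq hl
      (by simpa [SemiconjBy] using h.semiconjBy)
    rw [List.nil_append, List.head?_append_of_ne_nil _ h.middle_ne_nil, hwl]
  · simp [← h.append_eq]

lemma getLast?_eq (h : PowerSplitting l v w z) : (v ++ w ++ z).getLast? = l.getLast? := by
  rw [← h.append_eq, List.getLast?_append_of_ne_nil _ h.right_ne_nil,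
    List.getLast?_append_of_ne_nil _ h.right_ne_nil]

lemma of_isCyclicallyReduced (hl : IsCyclicallyReduced l) (hne : l ≠ []) :
    PowerSplitting l [] l l where
  append_eq := rfl
  right_ne_nil := hne
  middle_ne_nil := hne
  isCyclicallyReduced := hl
  isReduced := by simpa [isReduced_append] using ⟨hl.1, hl.2⟩
  semiconjBy := by simp
  length_le := le_rfl

lemma conj {i : ι} {g : M i} {m : List (Σ i, M i)}
    (hl : IsReduced (⟨i, g⟩ :: (m ++ [⟨i, g⁻¹⟩]))) (h : PowerSplitting m v w z) :
    PowerSplitting (⟨i, g⟩ :: (m ++ [⟨i, g⁻¹⟩])) (⟨i, g⟩ :: v) w (z ++ [⟨i, g⁻¹⟩]) where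
  append_eq := by simp [← h.append_eq]
  right_ne_nil := by simp
  middle_ne_nil := h.middle_ne_nil
  isCyclicallyReduced := h.isCyclicallyReduced
  isReduced := by
    simpa using (show IsReduced ([⟨i, g⟩] ++ m ++ [⟨i, g⁻¹⟩]) from hl).replace_middle
      h.isReduced (h.head?_eq hl.of_cons_append) h.getLast?_eq
  semiconjBy := by simp [SemiconjBy, mul_assoc, h.semiconjBy.eq]
  length_le := h.length_le.trans (by simp; omega)

lemma merge {i : ι} {g g' : M i} {m : List (Σ i, M i)}
    (hl : IsReduced (⟨i, g⟩ :: (m ++ [⟨i, g'⟩]))) (hg : g' * g ≠ 1) :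
    PowerSplitting (⟨i, g⟩ :: (m ++ [⟨i, g'⟩])) [⟨i, g⟩] (m ++ [⟨i, g' * g⟩])
      (m ++ [⟨i, g'⟩]) := by
  have hm : m ≠ [] := by rintro rfl; simp [isReduced_cons] at hl
  obtain ⟨-, hmg', hhead⟩ := isReduced_cons.1 hl
  rw [List.head?_append_of_ne_nil _ hm] at hhead
  have hw : IsReduced ((⟨i, g⟩ :: m) ++ [⟨i, g' * g⟩]) :=
    (show IsReduced ((⟨i, g⟩ :: m) ++ [⟨i, g'⟩]) from hl).replace_last hg
  refine ⟨rfl, by simp, by simp, ⟨(isReduced_cons.1 hw).2.1, ?_⟩, ?_,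
    by simp [SemiconjBy, mul_assoc], by simp⟩
  · simpa [List.head?_append_of_ne_nil _ hm] using hhead
  · refine isReduced_append.2 ⟨hw, hmg', ?_⟩
    simpa [List.head?_append_of_ne_nil _ hm, List.getLast?_cons] using hhead

lemma pow_succ_eq (h : PowerSplitting l v w z) (n : ℕ) :
    ofList l ^ (n + 1) = ofList v * ofList w ^ n * ofList z := by
  rw [pow_succ, (h.semiconjBy.pow_right n).eq, mul_assoc (ofList l ^ n), ← ofList_append,
    h.append_eq]

lemma syllableLength_pow_succ (h : PowerSplitting l v w z) {n : ℕ} (hn : n ≠ 0) :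
    syllableLength (ofList l ^ (n + 1)) = v.length + n * w.length + z.length := by
  rw [h.pow_succ_eq, ← ofList_flatten_replicate, ← ofList_append, ← ofList_append,
    syllableLength_ofList (h.isReduced.append_flatten_replicate_append h.isCyclicallyReduced hn)]
  simp [add_assoc]

end PowerSplitting

lemma exists_eq_cons_append_of_not_isSimple [Nonempty ι] {l : List (Σ i, M i)}
    (hs : ¬ IsSimple (ofList l)) : ∃ a m b, l = a :: (m ++ [b]) := by
  match l, hs with
  | [], hs => exact absurd isSimple_one hs
  | [a], hs => exact absurd (by simpa using isSimple_of a.2) hs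
  | a :: b :: l, _ =>
    exact ⟨a, (b :: l).dropLast, _, (congrArg _ (List.dropLast_append_getLast (by simp))).symm⟩

theorem exists_powerSplitting [Nonempty ι] {l : List (Σ i, M i)} (hl : IsReduced l)
    (hs : ¬ IsSimple (ofList l)) : ∃ v w z, PowerSplitting l v w z := by
  obtain ⟨⟨i, g⟩, m, ⟨j, g'⟩, rfl⟩ := exists_eq_cons_append_of_not_isSimple hs
  by_cases hij : i = j
  · subst hij
    by_cases hgg : g' * g = 1
    · obtain rfl : g' = g⁻¹ := eq_inv_of_mul_eq_one_left hgg
      have hconj : IsConj (ofList m) (ofList (⟨i, g⟩ :: (m ++ [⟨i, g⁻¹⟩]))) :=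
        isConj_iff.2 ⟨of g, by simp [mul_assoc]⟩
      obtain ⟨v, w, z, h⟩ :=
        exists_powerSplitting hl.of_cons_append fun hm => hs (hm.of_isConj hconj.symm)
      exact ⟨_, _, _, h.conj hl⟩
    · exact ⟨_, _, _, PowerSplitting.merge hl hgg⟩
  · refine ⟨_, _, _, PowerSplitting.of_isCyclicallyReduced ⟨hl, ?_⟩ (List.cons_ne_nil _ _)⟩
    simpa [List.getLast?_cons] using Ne.symm hij
termination_by l.length
decreasing_by subst_vars; simp

theorem exists_pow_eq_mul_pow_mul_of_not_isSimple [Nonempty ι] {x : CoprodI M}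
    (hx : ¬ IsSimple x) :
    ∃ a b c : CoprodI M,
      syllableLength a + syllableLength c ≤ 2 * syllableLength x ∧
      1 ≤ syllableLength b ∧ syllableLength b ≤ syllableLength x ∧
      ∀ n : ℕ, 3 ≤ n →
        x ^ n = a * b ^ (n - 2) * c ∧
        syllableLength (x ^ n) = syllableLength a + (n - 2) * syllableLength b +
          syllableLength c := by
  classical
  obtain ⟨l, hl, rfl⟩ : ∃ l, IsReduced l ∧ ofList l = x :=
    ⟨_, Word.isReduced _, ofList_equiv_toList x⟩
  obtain ⟨v, w, z, h⟩ := exists_powerSplitting hl hx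
  obtain ⟨hvw, hz, -⟩ := isReduced_append.1 h.isReduced
  have hlen : l.length = v.length + z.length := by rw [← h.append_eq, List.length_append]
  have hwl := h.length_le
  have hw1 : 1 ≤ w.length := List.length_pos_iff.2 h.middle_ne_nil
  refine ⟨ofList (v ++ w), ofList w, ofList z, ?_⟩
  simp only [syllableLength_ofList, hl, hvw, h.isCyclicallyReduced.1, hz, List.length_append]
  refine ⟨by omega, hw1, hwl, fun n hn => ?_⟩
  obtain ⟨k, rfl⟩ : ∃ k, n = k + 2 + 1 := ⟨n - 3, by omega⟩
  rw [h.syllableLength_pow_succ (by omega), h.pow_succ_eq, show k + 2 + 1 - 2 = k + 1 by omega]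
  exact ⟨by simp [pow_succ', mul_assoc], by ring⟩

end Monoid.CoprodI

section Transfer

universe u v

variable (G : Type u) (H : Type v) [Group G] [Group H]

/-- `G ∗ H` is identified with the coproduct of this family so that Mathlib's normal forms
(`CoprodI.Word`) apply; the `ULift`s put both factors in one universe. -/
def coprodFamily : Bool → Type (max u v)
  | true => ULift.{v} G
  | false => ULift.{u} H

instance : ∀ b, Group (coprodFamily G H b)
  | true => inferInstanceAs (Group (ULift G))
  | false => inferInstanceAs (Group (ULift H))

def coprodEquivCoprodI : Coprod G H ≃* CoprodI (coprodFamily G H) :=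
  MonoidHom.toMulEquiv
    (Coprod.lift ((of (i := true)).comp MulEquiv.ulift.symm.toMonoidHom)
      ((of (i := false)).comp MulEquiv.ulift.symm.toMonoidHom))
    (CoprodI.lift fun
      | true => Coprod.inl.comp MulEquiv.ulift.toMonoidHom
      | false => Coprod.inr.comp MulEquiv.ulift.toMonoidHom)
    (Coprod.hom_ext (MonoidHom.ext fun _ => rfl) (MonoidHom.ext fun _ => rfl))
    (CoprodI.ext_hom _ _ fun b => by cases b <;> exact MonoidHom.ext fun _ => rfl)

variable {G H}

lemma coprodEquivCoprodI_inl (g : G) :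
    coprodEquivCoprodI G H (Coprod.inl g) = of (i := true) (ULift.up g) := rfl

lemma coprodEquivCoprodI_inr (h : H) :
    coprodEquivCoprodI G H (Coprod.inr h) = of (i := false) (ULift.up h) := rfl

lemma coprodEquivCoprodI_symm_of {b : Bool} (m : coprodFamily G H b) :
    (∃ g : G, (coprodEquivCoprodI G H).symm (of m) = Coprod.inl g) ∨
      (∃ h : H, (coprodEquivCoprodI G H).symm (of m) = Coprod.inr h) := by
  cases b
  exacts [Or.inr ⟨m.down, rfl⟩, Or.inl ⟨m.down, rfl⟩]

lemma syllableLength_coprodEquivCoprodI_prod_le {w : List (Coprod G H)}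
    (hw : ∀ x ∈ w, (∃ g : G, x = Coprod.inl g) ∨ (∃ h : H, x = Coprod.inr h)) :
    syllableLength (coprodEquivCoprodI G H w.prod) ≤ w.length := by
  induction w with
  | nil => simpa using (syllableLength_ofList (isReduced_nil (M := coprodFamily G H))).le
  | cons x w ih =>
    have ih := ih fun y hy => hw y (List.mem_cons_of_mem _ hy)
    rw [List.prod_cons, map_mul, List.length_cons]
    obtain ⟨g, rfl⟩ | ⟨h, rfl⟩ := hw x List.mem_cons_self
    · rw [coprodEquivCoprodI_inl]
      exact (syllableLength_of_mul_le _ _).trans (by omega)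
    · rw [coprodEquivCoprodI_inr]
      exact (syllableLength_of_mul_le _ _).trans (by omega)

lemma sylLen_eq_syllableLength (f : Coprod G H) :
    sylLen f = syllableLength (coprodEquivCoprodI G H f) := by
  classical
  set e := coprodEquivCoprodI G H
  obtain ⟨l, hl, hlf⟩ : ∃ l, IsReduced l ∧ ofList l = e f :=
    ⟨_, Word.isReduced _, ofList_equiv_toList _⟩
  have hS : (l.map fun a => e.symm (of a.2)).length ∈ {k | ∃ w : List (Coprod G H),
      w.length = k ∧ (∀ x ∈ w, (∃ g : G, x = Coprod.inl g) ∨ (∃ h : H, x = Coprod.inr h)) ∧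
      w.prod = f} := by
    refine ⟨_, rfl, fun x hx => ?_, ?_⟩
    · obtain ⟨a, -, rfl⟩ := List.mem_map.1 hx
      exact coprodEquivCoprodI_symm_of a.2
    · simpa [ofList, map_list_prod, Function.comp_def] using congrArg e.symm hlf
  refine le_antisymm ((Nat.sInf_le hS).trans_eq ?_) ?_
  · rw [List.length_map, ← hlf, syllableLength_ofList hl]
  · obtain ⟨w, hw, hletters, hwf⟩ := Nat.sInf_mem ⟨_, hS⟩
    rw [sylLen, ← hw, ← hwf]
    exact syllableLength_coprodEquivCoprodI_prod_le hletters

lemma isSimpleElem_of_isSimple {f : Coprod G H} (h : IsSimple (coprodEquivCoprodI G H f)) :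
    IsSimpleElem f := by
  obtain ⟨b, m, hm⟩ := h
  obtain ⟨c, hc⟩ := isConj_iff.1 hm
  set e := coprodEquivCoprodI G H
  refine ⟨e.symm c, e.symm (of m), coprodEquivCoprodI_symm_of m, e.injective ?_⟩
  simp [← hc, mul_assoc]

end Transfer

theorem power_normal_form_of_nonsimple
    {G H : Type*} [Group G] [Group H] (f : Monoid.Coprod G H)
    (hf : ¬ IsSimpleElem f) :
    ∃ a b c : Monoid.Coprod G H,
      sylLen a + sylLen c ≤ 2 * sylLen f ∧
      1 ≤ sylLen b ∧ sylLen b ≤ sylLen f ∧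
      ∀ n : ℕ, 3 ≤ n →
        f ^ n = a * b ^ (n - 2) * c ∧
        sylLen (f ^ n) = sylLen a + (n - 2) * sylLen b + sylLen c := by
  obtain ⟨a, b, c, hac, hb, hbf, hpow⟩ :=
    exists_pow_eq_mul_pow_mul_of_not_isSimple fun h => hf (isSimpleElem_of_isSimple h)
  let e := (coprodEquivCoprodI G H).symm
  refine ⟨e a, e b, e c, ?_⟩
  simp only [e, sylLen_eq_syllableLength, map_pow, MulEquiv.apply_symm_apply]
  refine ⟨hac, hb, hbf, fun n hn => ⟨(coprodEquivCoprodI G H).injective ?_, (hpow n hn).2⟩⟩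
  simpa using (hpow n hn).1
end

section
/- Let G be a group with two finite generating sets S₁ and S₂. If G is a polynomially bounded knapsack (pbk) group with respect to S₁, then G is a polynomially bounded knapsack group with respect to S₂; i.e., the pbk property is independent of the choice of finite generating set. -/
/-!
Every generator in the finite set `S₂` is a word of bounded length over `S₁`, so
`|g|_{S₁} ≤ C |g|_{S₂}` for a constant `C`. Hence the size parameter `N` computed with
respect to `S₁` is at most `C` times the one computed with respect to `S₂`, and the bound
`q(N)` for `S₁` becomes the polynomial bound `q(C N)` for `S₂`.
-/

/-- Word length of `g` with respect to a generating set `S`: the least `k` such that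
`g` is a product of `k` elements of `S ∪ S⁻¹`. -/
noncomputable def wordLen {G : Type*} [Group G] (S : Set G) (g : G) : ℕ :=
  sInf {k | ∃ w : List G, w.length = k ∧ (∀ x ∈ w, x ∈ S ∨ x⁻¹ ∈ S) ∧ w.prod = g}

/-- `G` is a polynomially bounded knapsack (pbk) group with respect to the generating
set `S`: there is a polynomial `q` with non-negative integer coefficients such that a
knapsack instance `(g₁, …, g_k, g)` has a solution iff it has a solution with all
exponents bounded by `q(N)`, where `N = |g₁|_S + … + |g_k|_S + |g|_S`. -/
def IsPBK {G : Type*} [Group G] (S : Set G) : Prop :=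
  ∃ q : Polynomial ℕ, ∀ (k : ℕ) (g : Fin k → G) (g₀ : G),
    (∃ n : Fin k → ℕ, (List.ofFn fun i => g i ^ n i).prod = g₀) ↔
    (∃ n : Fin k → ℕ, (List.ofFn fun i => g i ^ n i).prod = g₀ ∧
      ∀ i : Fin k, n i ≤ q.eval ((∑ j, wordLen S (g j)) + wordLen S g₀))

theorem Polynomial.monotone_eval_nat (q : Polynomial ℕ) : Monotone fun x => q.eval x := by
  intro a b hab
  simp only [Polynomial.eval_eq_sum_range]
  gcongr

section WordLength

variable {G : Type*} [Group G] {S : Set G}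

theorem wordLen_le_length {g : G} {w : List G} (hw : ∀ x ∈ w, x ∈ S ∨ x⁻¹ ∈ S)
    (hprod : w.prod = g) : wordLen S g ≤ w.length :=
  Nat.sInf_le ⟨w, rfl, hw, hprod⟩

theorem exists_word_length_eq_wordLen (hgen : Subgroup.closure S = ⊤) (g : G) :
    ∃ w : List G, w.length = wordLen S g ∧ (∀ x ∈ w, x ∈ S ∨ x⁻¹ ∈ S) ∧ w.prod = g := by
  have hg : g ∈ (Subgroup.closure S).toSubmonoid := by rw [hgen]; trivial
  rw [Subgroup.closure_toSubmonoid] at hg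
  obtain ⟨w, hw, hprod⟩ := Submonoid.exists_list_of_mem_closure hg
  exact Nat.sInf_mem (s := {k | ∃ w : List G, w.length = k ∧ (∀ x ∈ w, x ∈ S ∨ x⁻¹ ∈ S) ∧
    w.prod = g}) ⟨w.length, w, rfl, hw, hprod⟩

theorem wordLen_one : wordLen S (1 : G) = 0 :=
  Nat.le_zero.mp (wordLen_le_length (w := []) (by simp) rfl)

theorem wordLen_inv_le (hgen : Subgroup.closure S = ⊤) (g : G) :
    wordLen S g⁻¹ ≤ wordLen S g := by
  obtain ⟨w, hlen, hw, hprod⟩ := exists_word_length_eq_wordLen hgen g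
  calc wordLen S g⁻¹ ≤ ((w.map (·⁻¹)).reverse).length := by
        refine wordLen_le_length (fun x hx => ?_) (by rw [← List.prod_inv_reverse, hprod])
        obtain ⟨y, hy, rfl⟩ := List.mem_map.mp (List.mem_reverse.mp hx)
        rw [inv_inv]
        exact (hw y hy).symm
    _ = wordLen S g := by rw [List.length_reverse, List.length_map, hlen]

theorem wordLen_mul_le (hgen : Subgroup.closure S = ⊤) (a b : G) :
    wordLen S (a * b) ≤ wordLen S a + wordLen S b := by
  obtain ⟨u, hu_len, hu, hu_prod⟩ := exists_word_length_eq_wordLen hgen a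
  obtain ⟨v, hv_len, hv, hv_prod⟩ := exists_word_length_eq_wordLen hgen b
  calc wordLen S (a * b) ≤ (u ++ v).length := by
        refine wordLen_le_length (fun x hx => ?_) (by rw [List.prod_append, hu_prod, hv_prod])
        exact (List.mem_append.mp hx).elim (hu x) (hv x)
    _ = wordLen S a + wordLen S b := by rw [List.length_append, hu_len, hv_len]

theorem wordLen_list_prod_le (hgen : Subgroup.closure S = ⊤) {C : ℕ} (w : List G)
    (hw : ∀ x ∈ w, wordLen S x ≤ C) : wordLen S w.prod ≤ C * w.length := by
  induction w with
  | nil => simp [wordLen_one]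
  | cons a t ih =>
    rw [List.forall_mem_cons] at hw
    calc wordLen S (a :: t).prod ≤ wordLen S a + wordLen S t.prod := wordLen_mul_le hgen a t.prod
      _ ≤ C + C * t.length := add_le_add hw.1 (ih hw.2)
      _ = C * (a :: t).length := by rw [List.length_cons]; ring

theorem exists_wordLen_le_mul_wordLen {T : Set G} (hSgen : Subgroup.closure S = ⊤)
    (hTfin : T.Finite) (hTgen : Subgroup.closure T = ⊤) :
    ∃ C : ℕ, ∀ g : G, wordLen S g ≤ C * wordLen T g := by
  obtain ⟨C, hC⟩ := (hTfin.image (wordLen S)).bddAbove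
  have hletter : ∀ x, x ∈ T ∨ x⁻¹ ∈ T → wordLen S x ≤ C := by
    rintro x (hx | hx)
    · exact hC ⟨x, hx, rfl⟩
    · simpa using (wordLen_inv_le hSgen x⁻¹).trans (hC ⟨x⁻¹, hx, rfl⟩)
  refine ⟨C, fun g => ?_⟩
  obtain ⟨w, hlen, hw, hprod⟩ := exists_word_length_eq_wordLen hTgen g
  calc wordLen S g = wordLen S w.prod := by rw [hprod]
    _ ≤ C * w.length := wordLen_list_prod_le hSgen w fun x hx => hletter x (hw x hx)
    _ = C * wordLen T g := by rw [hlen]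

end WordLength

theorem IsPBK.of_wordLen_le_mul {G : Type*} [Group G] {S T : Set G} (hS : IsPBK S) {C : ℕ}
    (hST : ∀ g : G, wordLen S g ≤ C * wordLen T g) : IsPBK T := by
  obtain ⟨q, hq⟩ := hS
  refine ⟨q.comp (Polynomial.C C * Polynomial.X), fun k g g₀ => ⟨fun hsol => ?_, ?_⟩⟩
  · obtain ⟨n, hn, hbound⟩ := (hq k g g₀).1 hsol
    refine ⟨n, hn, fun i => (hbound i).trans ?_⟩
    simp only [Polynomial.eval_comp, Polynomial.eval_mul, Polynomial.eval_C, Polynomial.eval_X]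
    refine q.monotone_eval_nat ?_
    rw [mul_add, Finset.mul_sum]
    exact add_le_add (Finset.sum_le_sum fun j _ => hST (g j)) (hST g₀)
  · rintro ⟨n, hn, -⟩
    exact ⟨n, hn⟩

theorem isPBK_independent_of_generating_set_general
    {G : Type*} [Group G] (S₁ S₂ : Set G)
    (hS₂fin : S₂.Finite)
    (hS₁gen : Subgroup.closure S₁ = ⊤) (hS₂gen : Subgroup.closure S₂ = ⊤)
    (hpbk : IsPBK S₁) : IsPBK S₂ := by
  obtain ⟨C, hC⟩ := exists_wordLen_le_mul_wordLen hS₁gen hS₂fin hS₂gen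
  exact hpbk.of_wordLen_le_mul hC

theorem isPBK_independent_of_generating_set
    {G : Type*} [Group G] (S₁ S₂ : Set G)
    (hS₁fin : S₁.Finite) (hS₂fin : S₂.Finite)
    (hS₁gen : Subgroup.closure S₁ = ⊤) (hS₂gen : Subgroup.closure S₂ = ⊤)
    (hpbk : IsPBK S₁) : IsPBK S₂ :=
  isPBK_independent_of_generating_set_general S₁ S₂ hS₂fin hS₁gen hS₂gen hpbk
end

section
/- Let F be a free group with basis v₁, …, v_n where n ≥ 2, let k ≥ 1, and let o, t : {1, …, k} → {1, …, n} be functions satisfying o(j) < t(j) for every j. If the product (v_{o(1)} v_{t(1)}⁻¹)(v_{o(2)} v_{t(2)}⁻¹) ⋯ (v_{o(k)} v_{t(k)}⁻¹) equals v₁ v_n⁻¹ in F, then o(1) = 1, t(k) = n, and t(j) = o(j+1) for every 1 ≤ j ≤ k−1. -/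
/-!
Read the pairs `(o j, t j)` as edges and `v_a v_b⁻¹` as the word of the edge `(a, b)`. In the
word of a list of edges, a cancellation can only happen between consecutive edges `(a, b)`,
`(b, c)`, and it leaves the word of the merged edge `(a, c)`. When every edge increases,
merging all such pairs from the right produces increasing edges with no shared vertex between
neighbours, whose word is therefore reduced. Since the reduced word of `v₁ v_n⁻¹` is a single
edge, everything must merge into one edge from `1` to `n`, i.e. the edges form a path.
-/

namespace FreeGroup

variable {α : Type*}

def edgeWord (L : List (α × α)) : List (α × Bool) :=
  L.flatMap fun e => [(e.1, true), (e.2, false)]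

def edgeProd (L : List (α × α)) : FreeGroup α :=
  (L.map fun e => of e.1 * (of e.2)⁻¹).prod

@[simp]
theorem edgeWord_nil : edgeWord ([] : List (α × α)) = [] := rfl

@[simp]
theorem edgeWord_cons (e : α × α) (L : List (α × α)) :
    edgeWord (e :: L) = (e.1, true) :: (e.2, false) :: edgeWord L := rfl

@[simp]
theorem edgeProd_nil : edgeProd ([] : List (α × α)) = 1 := rfl

@[simp]
theorem edgeProd_cons (e : α × α) (L : List (α × α)) :
    edgeProd (e :: L) = of e.1 * (of e.2)⁻¹ * edgeProd L := rfl

theorem edgeWord_injective : Function.Injective (edgeWord (α := α)) := by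
  intro L L' h
  induction L generalizing L' with
  | nil => cases L' <;> simp_all
  | cons e L ih =>
    cases L' with
    | nil => simp at h
    | cons e' L' =>
      simp only [edgeWord_cons, List.cons.injEq, Prod.mk.injEq, and_true] at h
      exact congrArg₂ _ (Prod.ext h.1 h.2.1) (ih h.2.2)

theorem mk_edgeWord (L : List (α × α)) : mk (edgeWord L) = edgeProd L := by
  induction L with
  | nil => rfl
  | cons e L ih =>
    rw [edgeProd_cons, ← ih, edgeWord_cons, of, of, inv_mk, mul_mk, mul_mk]
    rfl

theorem isReduced_edgeWord {L : List (α × α)} (hne : ∀ e ∈ L, e.1 ≠ e.2)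
    (hchain : L.IsChain fun e f => e.2 ≠ f.1) : IsReduced (edgeWord L) := by
  induction L with
  | nil => exact IsReduced.nil
  | cons e L ih =>
    have hL : IsReduced (edgeWord L) :=
      ih (fun f hf => hne f (List.mem_cons_of_mem e hf)) hchain.tail
    rw [edgeWord_cons, isReduced_cons_cons]
    refine ⟨fun h => absurd h (hne e List.mem_cons_self), ?_⟩
    cases L with
    | nil => exact IsReduced.singleton
    | cons f L =>
      rw [edgeWord_cons, isReduced_cons_cons]
      exact ⟨fun h => absurd h (List.isChain_cons_cons.mp hchain).1, hL⟩

variable [DecidableEq α]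

def contractEdges : List (α × α) → List (α × α)
  | [] => []
  | e :: L =>
    match contractEdges L with
    | [] => [e]
    | f :: L' => if e.2 = f.1 then (e.1, f.2) :: L' else e :: f :: L'

theorem edgeProd_contractEdges (L : List (α × α)) :
    edgeProd (contractEdges L) = edgeProd L := by
  induction L with
  | nil => rfl
  | cons e L ih =>
    rw [edgeProd_cons, ← ih, contractEdges]
    split
    case h_1 hL => rw [hL]; simp
    case h_2 f L' hL =>
      rw [hL]
      split_ifs with h
      · simp [h, mul_assoc]
      · rfl

theorem lt_of_mem_contractEdges [Preorder α] {L : List (α × α)} (hL : ∀ e ∈ L, e.1 < e.2) :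
    ∀ e ∈ contractEdges L, e.1 < e.2 := by
  induction L with
  | nil => simp [contractEdges]
  | cons e L ih =>
    have he := hL e List.mem_cons_self
    have ih := ih fun f hf => hL f (List.mem_cons_of_mem e hf)
    rw [contractEdges]
    split
    case h_1 => simpa using he
    case h_2 f L' hc =>
      rw [hc] at ih
      split_ifs with h
      · simp only [List.forall_mem_cons] at ih ⊢
        exact ⟨he.trans (h ▸ ih.1), ih.2⟩
      · exact List.forall_mem_cons.mpr ⟨he, ih⟩

theorem isChain_contractEdges (L : List (α × α)) :
    (contractEdges L).IsChain fun e f => e.2 ≠ f.1 := by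
  induction L with
  | nil => exact List.isChain_nil
  | cons e L ih =>
    rw [contractEdges]
    split
    case h_1 => exact List.isChain_singleton e
    case h_2 f L' hc =>
      rw [hc] at ih
      split_ifs with h
      · cases L' with
        | nil => exact List.isChain_singleton _
        | cons g L' => exact List.isChain_cons_cons.mpr (List.isChain_cons_cons.mp ih)
      · exact List.isChain_cons_cons.mpr ⟨h, ih⟩

theorem toWord_edgeProd [Preorder α] {L : List (α × α)} (hL : ∀ e ∈ L, e.1 < e.2) :
    (edgeProd L).toWord = edgeWord (contractEdges L) := by
  rw [← edgeProd_contractEdges, ← mk_edgeWord, toWord_mk, IsReduced.reduce_eq]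
  exact isReduced_edgeWord (fun e he => (lt_of_mem_contractEdges hL e he).ne)
    (isChain_contractEdges L)

theorem contractEdges_eq_nil {L : List (α × α)} (h : contractEdges L = []) : L = [] := by
  cases L with
  | nil => rfl
  | cons e L =>
    rw [contractEdges] at h
    split at h
    · simp at h
    · split_ifs at h

-- `L.map Prod.fst ++ [y] = x :: L.map Prod.snd` says that `L` is a path from `x` to `y`.
theorem map_fst_append_eq_of_contractEdges_eq_singleton {L : List (α × α)} {x y : α}
    (h : contractEdges L = [(x, y)]) : L.map Prod.fst ++ [y] = x :: L.map Prod.snd := by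
  induction L generalizing x y with
  | nil => simp [contractEdges] at h
  | cons e L ih =>
    rw [contractEdges] at h
    split at h
    case h_1 hc =>
      obtain rfl := contractEdges_eq_nil hc
      simp_all
    case h_2 f L' hc =>
      split_ifs at h with hef
      · simp only [List.cons.injEq, Prod.mk.injEq] at h
        obtain ⟨⟨rfl, rfl⟩, rfl⟩ := h
        simp [ih hc, hef]
      · simp at h

theorem map_fst_append_eq_of_edgeProd_eq [Preorder α] {L : List (α × α)} {a b : α} (hab : a < b)
    (hL : ∀ e ∈ L, e.1 < e.2) (h : edgeProd L = of a * (of b)⁻¹) :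
    L.map Prod.fst ++ [b] = a :: L.map Prod.snd := by
  have hab' : ∀ e ∈ [(a, b)], e.1 < e.2 := List.forall_mem_singleton.mpr hab
  have hword := congrArg toWord (h.trans (mul_one _).symm : edgeProd L = edgeProd [(a, b)])
  rw [toWord_edgeProd hL, toWord_edgeProd hab', edgeWord_injective.eq_iff] at hword
  exact map_fst_append_eq_of_contractEdges_eq_singleton hword

end FreeGroup

/-- In a free group with basis `v₁, …, v_n` (modeled as `FreeGroup (Fin n)` with
`v_j = FreeGroup.of j`), if `o, t : {1,…,k} → {1,…,n}` satisfy `o(j) < t(j)` for all `j`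
and `(v_{o(1)} v_{t(1)}⁻¹) ⋯ (v_{o(k)} v_{t(k)}⁻¹) = v₁ v_n⁻¹`, then `o(1) = 1`,
`t(k) = n`, and `t(j) = o(j+1)` for `1 ≤ j ≤ k-1`. -/
theorem free_group_path_detection (n k : ℕ) (hn : 2 ≤ n) (hk : 1 ≤ k)
    (o t : Fin k → Fin n) (hot : ∀ j, o j < t j)
    (hp : (List.ofFn fun j => FreeGroup.of (o j) * (FreeGroup.of (t j))⁻¹).prod =
      FreeGroup.of (⟨0, by omega⟩ : Fin n) * (FreeGroup.of (⟨n - 1, by omega⟩ : Fin n))⁻¹) :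
    o ⟨0, by omega⟩ = (⟨0, by omega⟩ : Fin n) ∧
    t ⟨k - 1, by omega⟩ = (⟨n - 1, by omega⟩ : Fin n) ∧
    ∀ (j : ℕ) (hj : j + 1 < k), t ⟨j, by omega⟩ = o ⟨j + 1, hj⟩ := by
  have hpath : List.ofFn o ++ [⟨n - 1, by omega⟩] = ⟨0, by omega⟩ :: List.ofFn t := by
    simpa [List.map_ofFn, Function.comp_def] using
      FreeGroup.map_fst_append_eq_of_edgeProd_eq (L := List.ofFn fun j => (o j, t j))
        (a := ⟨0, by omega⟩) (b := ⟨n - 1, by omega⟩) (Fin.mk_lt_mk.mpr (by omega))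
        (by simpa [List.mem_ofFn] using hot)
        (by simpa [FreeGroup.edgeProd, List.map_ofFn, Function.comp_def] using hp)
  have hget (i : ℕ) (hi : i < k + 1) := List.getElem_of_eq hpath (by simpa using hi)
  refine ⟨?_, ?_, fun j hj => ?_⟩
  · simpa [List.getElem_append_left (by simp; omega : 0 < (List.ofFn o).length)]
      using hget 0 (by omega)
  · simpa [List.getElem_cons, Nat.one_le_iff_ne_zero.mp hk] using (hget k (by omega)).symm
  · simpa [List.getElem_append_left, hj] using (hget (j + 1) (by omega)).symm
end
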